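/- Let $\mathcal{R} = (\mathcal{A}, \mathcal{S}, \mathfrak{p})$ be a risk measurement regime on $\mathcal{L}^{\infty}(\Omega, \mathcal{F})$ such that $\rho_{\mathcal{R}}$ is finite and continuous from above. Then there exists a weak reference probability measure: a probability measure $\mathbb{P}$ on $(\Omega, \mathcal{F})$ such that $\rho_{\mathcal{R}}^*(c\mathbb{P}) < \infty$ for a suitable $c > 0$, and for every $A \in \mathcal{F}$: $\mathbb{P}(A) = 0$ if and only if $\mu(A) = 0$ for all $\mu \in \mathrm{dom}(\rho_{\mathcal{R}}^*)$. Moreover, $\mathrm{dom}(\rho_{\mathcal{R}}^*) \subseteq (\mathbf{ca}_{\mathbb{P}})_+$. -/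

import Mathlib

/-!
By convexity and the Riesz extension theorem, `ρ` has a linear minorant, so `dom ρ*` is
nonempty. Every `μ ∈ dom ρ*` satisfies `μ ≤ ρ + ρ*(μ)`; monotonicity of `ρ` makes `μ` positive
and continuity from above makes `μ(1_{Bₙ}) → 0` whenever `Bₙ ↓ ∅`, uniformly in `μ` once `μ` is
scaled by `1 / (1 + ρ 0 + ρ*(μ))`. Hence every such `μ` is integration against a finite measure,
and a greedy exhaustion for this uniformly continuous family yields a sequence `μₙ` in `dom ρ*`
with the same null sets as all of `dom ρ*`. A convex combination `∑ bₙ μₙ` with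
`∑ bₙ ρ*(μₙ) < ∞` is again in `dom ρ*`; normalizing its measure gives `ℙ`. It is not zero because
cash additivity along `S` forces `μ U = p U > 0` for every `μ ∈ dom ρ*`.
-/

open MeasureTheory

def BM (Ω : Type*) [MeasurableSpace Ω] : Submodule ℝ (Ω → ℝ) where
  carrier := {f | Measurable f ∧ ∃ C : ℝ, ∀ ω, |f ω| ≤ C}
  add_mem' := by
    rintro f g ⟨hf, Cf, hCf⟩ ⟨hg, Cg, hCg⟩
    exact ⟨hf.add hg, Cf + Cg, fun ω =>
      (abs_add_le _ _).trans (add_le_add (hCf ω) (hCg ω))⟩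
  zero_mem' := ⟨measurable_const, 0, fun ω => by simp⟩
  smul_mem' := by
    rintro c f ⟨hf, Cf, hCf⟩
    refine ⟨hf.const_smul c, |c| * Cf, fun ω => ?_⟩
    have h : |(c • f) ω| = |c| * |f ω| := by simp [abs_mul]
    rw [h]
    exact mul_le_mul_of_nonneg_left (hCf ω) (abs_nonneg c)

variable {Ω : Type*} [MeasurableSpace Ω]

noncomputable instance : PartialOrder (BM Ω) :=
  PartialOrder.lift (fun f => (f : Ω → ℝ)) Subtype.coe_injective

noncomputable def indBM (A : Set Ω) (hA : MeasurableSet A) : BM Ω :=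
  ⟨A.indicator fun _ => (1 : ℝ),
    (measurable_const (a := (1 : ℝ))).indicator hA, 1, fun ω => by
      by_cases h : ω ∈ A <;> simp [Set.indicator_apply, h]⟩

noncomputable def rstar (ρ : BM Ω → ℝ) (μ : BM Ω → ℝ) : EReal :=
  ⨆ X : BM Ω, ((μ X - ρ X : ℝ) : EReal)

/-- Membership in `ba`, the dual of `𝓛^∞`. -/
def MemBa (μ : BM Ω → ℝ) : Prop :=
  IsLinearMap ℝ μ ∧ ∃ M : ℝ, ∀ (X : BM Ω) (C : ℝ),
    (∀ ω, |(X : Ω → ℝ) ω| ≤ C) → |μ X| ≤ M * C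

/-- The effective domain of `ρ*` inside `ba`. -/
def domStar (ρ : BM Ω → ℝ) : Set (BM Ω → ℝ) :=
  {μ | MemBa μ ∧ rstar ρ μ ≠ ⊤}

open Set Filter Topology
open scoped ENNReal

lemma nonpos_of_forall_pos_mul_le {a c : ℝ} (h : ∀ t > 0, t * a ≤ c) : a ≤ 0 := by
  by_contra! ha
  have := h ((|c| + 1) / a) (by positivity)
  rw [div_mul_cancel₀ _ ha.ne'] at this
  linarith [le_abs_self c]

theorem ConvexOn.exists_linearMap_le_sub {V : Type*} [AddCommGroup V] [Module ℝ V] {f : V → ℝ}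
    (hf : ConvexOn ℝ univ f) : ∃ ℓ : V →ₗ[ℝ] ℝ, ∀ x, ℓ x ≤ f x - f 0 := by
  have hepi := (hf.add_const (-f 0)).convex_epigraph
  set epi := {p : V × ℝ | p.1 ∈ univ ∧ f p.1 + -f 0 ≤ p.2}
  have hmem : ∀ x, (x, f x - f 0) ∈ epi := fun x => ⟨trivial, by simp [sub_eq_add_neg]⟩
  have h0 : (0 : V × ℝ) ∈ epi := ⟨trivial, by simp⟩
  have hunit : ((0 : V), (1 : ℝ)) ≠ 0 := by simp
  -- extend `(0, 1) ↦ 1` to a functional that is nonnegative on the cone over the epigraph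
  obtain ⟨g, hg, hgC⟩ :=
    riesz_extension ((ConvexCone.hull ℝ epi).toPointedCone (ConvexCone.subset_hull h0))
    (LinearPMap.mkSpanSingleton _ (1 : ℝ) hunit)
    (by
      rintro ⟨_, hx⟩ hxC
      obtain ⟨c, rfl⟩ := Submodule.mem_span_singleton.1 hx
      obtain ⟨r, hr, ⟨y, s⟩, ⟨-, hys⟩, hyx⟩ :=
        (ConvexCone.mem_hull_of_convex hepi).1 hxC
      simp only [Prod.smul_mk, smul_zero, smul_eq_mul, mul_one, Prod.mk.injEq] at hyx
      obtain rfl : y = 0 := (smul_eq_zero.1 hyx.1).resolve_left hr.ne'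
      rw [LinearPMap.mkSpanSingleton'_apply, RingHom.id_apply, smul_eq_mul, mul_one, ← hyx.2]
      simp only [Pi.add_apply, add_neg_cancel] at hys
      positivity)
    (fun ⟨v, r⟩ => ⟨⟨(f v - f 0 - r) • ((0 : V), (1 : ℝ)), Submodule.smul_mem _ _
      (Submodule.mem_span_singleton_self _)⟩, ConvexCone.subset_hull (by simpa using hmem v)⟩)
  refine ⟨-(g.comp (LinearMap.inl ℝ V ℝ)), fun x => ?_⟩
  have hgunit : g ((0 : V), (1 : ℝ)) = 1 :=
    (hg _).trans (LinearPMap.mkSpanSingleton_apply ℝ ℝ hunit 1)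
  have hgx := hgC _ (ConvexCone.subset_hull (hmem x))
  have hsplit : (x, f x - f 0) = (x, (0 : ℝ)) + (f x - f 0) • ((0 : V), (1 : ℝ)) := by simp
  rw [hsplit, map_add, map_smul, hgunit, smul_eq_mul, mul_one] at hgx
  simp only [LinearMap.neg_apply, LinearMap.comp_apply, LinearMap.inl_apply]
  linarith

namespace MeasureTheory
variable {ι : Type*}

lemma exists_null_set_forall_min_le (ν : ι → Measure Ω) [Nonempty ι] (σ : Measure Ω) :
    ∃ i A, MeasurableSet A ∧ σ A = 0 ∧
      ∀ j B, MeasurableSet B → σ B = 0 → min (ν j B) 1 ≤ 2 * ν i A := by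
  -- capping the masses at `1` keeps `τ` finite without bounding the family
  set τ := ⨆ (j) (B) (_ : MeasurableSet B) (_ : σ B = 0), min (ν j B) 1 with hτdef
  have hle : ∀ j B, MeasurableSet B → σ B = 0 → min (ν j B) 1 ≤ τ := fun j B hB hσB =>
    le_iSup₂_of_le j B <| le_iSup₂_of_le (f := fun _ _ => min (ν j B) 1) hB hσB le_rfl
  rcases eq_or_ne τ 0 with hτ | hτ
  · obtain ⟨i⟩ := ‹Nonempty ι›
    exact ⟨i, ∅, .empty, measure_empty, fun j B hB hσB => by simpa [hτ] using hle j B hB hσB⟩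
  have hτ1 : τ ≠ ∞ := ne_top_of_le_ne_top ENNReal.one_ne_top
    (iSup₂_le fun _ _ => iSup₂_le fun _ _ => min_le_right _ _)
  obtain ⟨i, A, hA, hσA, hlt⟩ : ∃ i A, MeasurableSet A ∧ σ A = 0 ∧ τ / 2 < min (ν i A) 1 := by
    have h := ENNReal.half_lt_self hτ hτ1
    conv_rhs at h => rw [hτdef]
    simpa only [lt_iSup_iff, exists_prop] using h
  refine ⟨i, A, hA, hσA, fun j B hB hσB => (hle j B hB hσB).trans ?_⟩
  calc τ = 2 * (τ / 2) := (ENNReal.mul_div_cancel two_ne_zero ENNReal.ofNat_ne_top).symm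
    _ ≤ 2 * ν i A := by gcongr; exact hlt.le.trans (min_le_left _ _)

theorem exists_seq_forall_null_of_tendsto_iSup (ν : ι → Measure Ω) [Nonempty ι]
    (hunif : ∀ B : ℕ → Set Ω, (∀ n, MeasurableSet (B n)) → Antitone B → ⋂ n, B n = ∅ →
      Tendsto (fun n => ⨆ i, ν i (B n)) atTop (𝓝 0)) :
    ∃ f : ℕ → ι, ∀ A, MeasurableSet A → (∀ n, ν (f n) A = 0) → ∀ i, ν i A = 0 := by
  choose i A hA hσA hmax using exists_null_set_forall_min_le ν
  let σ : ℕ → Measure Ω := fun n => Nat.rec 0 (fun _ s => s + ν (i s)) n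
  have hσ : ∀ n S, σ n S = ∑ m ∈ Finset.range n, ν (i (σ m)) S := by
    intro n S
    induction n with
    | zero => simp [σ]
    | succ n ih => rw [Finset.sum_range_succ, ← ih]; rfl
  have hnull : ∀ m n, m < n → ν (i (σ m)) (A (σ n)) = 0 := fun m n hmn =>
    Finset.sum_eq_zero_iff.1 ((hσ n _).symm.trans (hσA _)) m (Finset.mem_range.2 hmn)
  -- the sets chosen after step `N` are null for the `N`-th measure, so only the part of the
  -- `N`-th set lying in `B N`, which shrinks to `∅`, carries mass
  have hsmall : ∀ ε > 0, ∃ N, ν (i (σ N)) (A (σ N)) ≤ ε := by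
    intro ε hε
    set E : ℕ → Set Ω := fun n => ⋃ m ≥ n, A (σ m)
    set B : ℕ → Set Ω := fun n => E n \ ⋂ k, E k
    have hE : ∀ n, MeasurableSet (E n) := fun n => .iUnion fun m => .iUnion fun _ => hA _
    have hB : ∀ n, MeasurableSet (B n) := fun n => (hE n).diff (.iInter hE)
    have hBanti : Antitone B := by
      intro n n' hnn' x ⟨hx, hxE⟩
      simp only [E, mem_iUnion] at hx
      obtain ⟨m, hm, hxm⟩ := hx
      exact ⟨mem_iUnion₂.2 ⟨m, hnn'.trans hm, hxm⟩, hxE⟩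
    have hBempty : ⋂ n, B n = ∅ :=
      eq_empty_of_forall_notMem fun x hx =>
        (mem_iInter.1 hx 0).2 (mem_iInter.2 fun n => (mem_iInter.1 hx n).1)
    obtain ⟨N, hN⟩ := ENNReal.tendsto_atTop_zero.1 (hunif B hB hBanti hBempty) ε hε
    have hsub : A (σ N) ⊆ B N ∪ E (N + 1) := by
      intro x hx
      by_cases hxE : x ∈ ⋂ k, E k
      · exact Or.inr (mem_iInter.1 hxE _)
      · exact Or.inl ⟨mem_iUnion₂.2 ⟨N, le_rfl, hx⟩, hxE⟩
    have htail : ν (i (σ N)) (E (N + 1)) = 0 :=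
      measure_iUnion_null fun m => measure_iUnion_null fun hm => hnull N m (by omega)
    refine ⟨N, ?_⟩
    calc ν (i (σ N)) (A (σ N)) ≤ ν (i (σ N)) (B N) + ν (i (σ N)) (E (N + 1)) :=
          (measure_mono hsub).trans (measure_union_le _ _)
      _ ≤ ⨆ j, ν j (B N) := by rw [htail, add_zero]; exact le_iSup (fun j => ν j (B N)) _
      _ ≤ ε := hN N le_rfl
  refine ⟨fun n => i (σ n), fun S hS hS0 j => ?_⟩
  have hσS : ∀ n, σ n S = 0 := fun n => by rw [hσ]; exact Finset.sum_eq_zero fun m _ => hS0 m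
  have hmin : min (ν j S) 1 = 0 := by
    refine le_antisymm (ENNReal.le_of_forall_pos_le_add fun ε hε _ => ?_) zero_le
    obtain ⟨N, hN⟩ := hsmall (ε / 2) (by simpa using hε.ne')
    calc min (ν j S) 1 ≤ 2 * ν (i (σ N)) (A (σ N)) := hmax _ j S hS (hσS N)
      _ ≤ 2 * (ε / 2) := by gcongr
      _ = 0 + ε := by rw [zero_add, ENNReal.mul_div_cancel two_ne_zero ENNReal.ofNat_ne_top]
  simpa using hmin

end MeasureTheory

namespace BM

lemma measurable (X : BM Ω) : Measurable (X : Ω → ℝ) := X.2.1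

lemma exists_abs_le (X : BM Ω) : ∃ C, ∀ ω, |(X : Ω → ℝ) ω| ≤ C := X.2.2

lemma integrable (X : BM Ω) (ν : Measure Ω) [IsFiniteMeasure ν] :
    Integrable (X : Ω → ℝ) ν := by
  obtain ⟨C, hC⟩ := BM.exists_abs_le X
  exact (integrable_const C).mono' (BM.measurable X).aestronglyMeasurable (.of_forall hC)

lemma _root_.MeasureTheory.SimpleFunc.mem_BM (f : SimpleFunc Ω ℝ) : ⇑f ∈ BM Ω :=
  ⟨f.measurable, (f.finite_range.image abs).bddAbove.elim fun C hC =>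
    ⟨C, fun ω => hC ⟨_, mem_range_self ω, rfl⟩⟩⟩

noncomputable def floorApprox (X : BM Ω) {ε : ℝ} (hε : 0 < ε) : SimpleFunc Ω ℝ where
  toFun ω := ε * ⌊(X : Ω → ℝ) ω / ε⌋
  measurableSet_fiber' r :=
    (measurable_const.mul (measurable_from_top.comp ((BM.measurable X).div_const ε).floor))
      (measurableSet_singleton r)
  finite_range' := by
    obtain ⟨C, hC⟩ := BM.exists_abs_le X
    refine ((Set.finite_Icc ⌊-C / ε⌋ ⌊C / ε⌋).image fun z : ℤ => ε * z).subset ?_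
    rintro _ ⟨ω, rfl⟩
    refine ⟨_, ⟨Int.floor_le_floor ?_, Int.floor_le_floor ?_⟩, rfl⟩ <;> gcongr
    exacts [(abs_le.1 (hC ω)).1, (abs_le.1 (hC ω)).2]

lemma abs_sub_floorApprox_le (X : BM Ω) {ε : ℝ} (hε : 0 < ε) (ω : Ω) :
    |(X : Ω → ℝ) ω - floorApprox X hε ω| ≤ ε := by
  have h1 := Int.floor_le ((X : Ω → ℝ) ω / ε)
  have h2 := Int.lt_floor_add_one ((X : Ω → ℝ) ω / ε)
  rw [le_div_iff₀ hε] at h1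
  rw [div_lt_iff₀ hε] at h2
  show |_ - ε * _| ≤ ε
  rw [abs_le]; constructor <;> nlinarith

lemma eq_zero_of_forall_indBM {Λ : BM Ω → ℝ} (hlin : IsLinearMap ℝ Λ) {M : ℝ}
    (hM : ∀ (X : BM Ω) (C : ℝ), (∀ ω, |(X : Ω → ℝ) ω| ≤ C) → |Λ X| ≤ M * C)
    (hind : ∀ A (hA : MeasurableSet A), Λ (indBM A hA) = 0) (X : BM Ω) : Λ X = 0 := by
  have hsimple : ∀ f : SimpleFunc Ω ℝ, Λ ⟨f, f.mem_BM⟩ = 0 := by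
    intro f
    induction f using SimpleFunc.induction with
    | @const c s hs =>
      refine (congrArg Λ (?_ : _ = c • indBM s hs)).trans
        (by rw [hlin.map_smul, hind, smul_zero])
      ext ω
      by_cases hω : ω ∈ s <;> simp [indBM, hω]
    | add _ hf hg => exact (hlin.map_add ⟨_, _⟩ ⟨_, _⟩).trans (by rw [hf, hg, add_zero])
  have hsmall : ∀ ε > 0, |Λ X| ≤ M * ε := fun ε hε => by
    set Y : BM Ω := ⟨_, (floorApprox X hε).mem_BM⟩
    have hsplit : X = (X - Y) + Y := by abel
    rw [hsplit, hlin.map_add, hsimple, add_zero]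
    exact hM _ ε (abs_sub_floorApprox_le X hε)
  have hlim : Tendsto (fun ε => M * ε) (𝓝[>] 0) (𝓝 0) :=
    ((continuous_const_mul M).tendsto' 0 0 (mul_zero M)).mono_left nhdsWithin_le_nhds
  exact abs_nonpos_iff.1 (ge_of_tendsto hlim (eventually_nhdsWithin_of_forall hsmall))

end BM

lemma indBM_mono {A B : Set Ω} (hA : MeasurableSet A) (hB : MeasurableSet B) (h : A ⊆ B) :
    indBM A hA ≤ indBM B hB :=
  fun _ => Set.indicator_le_indicator_of_subset h (fun _ => zero_le_one) _

lemma indBM_nonneg (A : Set Ω) (hA : MeasurableSet A) : 0 ≤ indBM A hA :=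
  Set.indicator_nonneg fun _ _ => zero_le_one

lemma indBM_empty : indBM (∅ : Set Ω) .empty = 0 := Subtype.ext (Set.indicator_empty _)

lemma indBM_union {A B : Set Ω} (hA : MeasurableSet A) (hB : MeasurableSet B) (h : Disjoint A B) :
    indBM (A ∪ B) (hA.union hB) = indBM A hA + indBM B hB :=
  Subtype.ext (Set.indicator_union_of_disjoint h _)

section PositiveFunctional

variable {μ : BM Ω → ℝ}

lemma monotone_of_nonneg (hlin : IsLinearMap ℝ μ) (hpos : ∀ X, 0 ≤ X → 0 ≤ μ X) : Monotone μ :=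
  fun X Y h => sub_nonneg.1 <| hlin.map_sub Y X ▸ hpos _ fun ω => sub_nonneg.2 (h ω)

lemma abs_apply_le (hlin : IsLinearMap ℝ μ) (hpos : ∀ X, 0 ≤ X → 0 ≤ μ X) {X : BM Ω} {C : ℝ}
    (hC : ∀ ω, |(X : Ω → ℝ) ω| ≤ C) : |μ X| ≤ μ (indBM univ .univ) * C := by
  have hlo : -(C • indBM univ .univ) ≤ X := fun ω => by simp [indBM, (abs_le.1 (hC ω)).1]
  have hhi : X ≤ C • indBM univ .univ := fun ω => by simp [indBM, (abs_le.1 (hC ω)).2]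
  have := monotone_of_nonneg hlin hpos hlo
  have := monotone_of_nonneg hlin hpos hhi
  rw [hlin.map_neg, hlin.map_smul, smul_eq_mul] at *
  exact abs_le.2 ⟨by linarith, by linarith⟩

lemma pos_apply_indBM_univ (hlin : IsLinearMap ℝ μ) (hpos : ∀ X, 0 ≤ X → 0 ≤ μ X) {X : BM Ω}
    (hX : 0 < μ X) : 0 < μ (indBM univ .univ) := by
  obtain ⟨C, hC⟩ := BM.exists_abs_le X
  have h := (le_abs_self _).trans (abs_apply_le hlin hpos hC)
  refine (hpos _ (indBM_nonneg _ _)).lt_of_ne fun h0 => ?_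
  rw [← h0, zero_mul] at h
  linarith

lemma memBa_of_nonneg (hlin : IsLinearMap ℝ μ) (hpos : ∀ X, 0 ≤ X → 0 ≤ μ X) : MemBa μ :=
  ⟨hlin, _, fun _ _ => abs_apply_le hlin hpos⟩

lemma exists_measure_indBM (hlin : IsLinearMap ℝ μ) (hpos : ∀ X, 0 ≤ X → 0 ≤ μ X)
    (hcont : ∀ (B : ℕ → Set Ω) (hB : ∀ n, MeasurableSet (B n)), Antitone B → ⋂ n, B n = ∅ →
      Tendsto (fun n => μ (indBM (B n) (hB n))) atTop (𝓝 0)) :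
    ∃ ν : Measure Ω, IsFiniteMeasure ν ∧
      ∀ A (hA : MeasurableSet A), ν A = ENNReal.ofReal (μ (indBM A hA)) := by
  classical
  have hring : IsSetRing {A : Set Ω | MeasurableSet A} :=
    ⟨.empty, fun _ _ => .union, fun _ _ => .diff⟩
  let m : AddContent ℝ≥0∞ {A : Set Ω | MeasurableSet A} := hring.addContent_of_union
    (fun A => if hA : MeasurableSet A then ENNReal.ofReal (μ (indBM A hA)) else 0)
    (by simp [indBM_empty, hlin.map_zero])
    (fun {A B} (hA : MeasurableSet A) (hB : MeasurableSet B) hAB => by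
      simp only [dif_pos hA, dif_pos hB, dif_pos (hA.union hB), indBM_union hA hB hAB,
        hlin.map_add]
      exact ENNReal.ofReal_add (hpos _ (indBM_nonneg _ _)) (hpos _ (indBM_nonneg _ _)))
  have hm : ∀ A (hA : MeasurableSet A), m A = ENNReal.ofReal (μ (indBM A hA)) := fun A hA => by
    change (if h : MeasurableSet A then _ else _) = _
    exact dif_pos hA
  refine ⟨Measure.ofMeasurable (fun A _ => m A) m.empty' fun f hf hdisj =>
    addContent_iUnion_eq_sum_of_tendsto_zero hring m (fun A hA => by simp [hm A hA])
      (fun B hB hanti hempty => by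
        simpa [hm _ (hB _)] using ENNReal.tendsto_ofReal (hcont B hB hanti hempty))
      hf (.iUnion hf) hdisj, ?_, fun A hA => (Measure.ofMeasurable_apply A hA).trans (hm A hA)⟩
  exact ⟨by rw [Measure.ofMeasurable_apply _ .univ, hm _ .univ]; exact ENNReal.ofReal_lt_top⟩

lemma exists_measure_eq_integral (hlin : IsLinearMap ℝ μ) (hpos : ∀ X, 0 ≤ X → 0 ≤ μ X)
    (hcont : ∀ (B : ℕ → Set Ω) (hB : ∀ n, MeasurableSet (B n)), Antitone B → ⋂ n, B n = ∅ →
      Tendsto (fun n => μ (indBM (B n) (hB n))) atTop (𝓝 0)) :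
    ∃ ν : Measure Ω, IsFiniteMeasure ν ∧
      (∀ A (hA : MeasurableSet A), ν A = ENNReal.ofReal (μ (indBM A hA))) ∧
      ∀ X : BM Ω, μ X = ∫ ω, (X : Ω → ℝ) ω ∂ν := by
  obtain ⟨ν, hν, hνA⟩ := exists_measure_indBM hlin hpos hcont
  refine ⟨ν, hν, hνA, fun X => sub_eq_zero.1 ?_⟩
  refine BM.eq_zero_of_forall_indBM (Λ := fun X => μ X - ∫ ω, (X : Ω → ℝ) ω ∂ν)
    ⟨fun X Y => ?_, fun c X => ?_⟩ (M := μ (indBM univ .univ) + ν.real univ)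
    (fun X C hC => ?_) (fun A hA => ?_) X
  · simp only [Submodule.coe_add, Pi.add_apply, hlin.map_add,
      integral_add (BM.integrable X ν) (BM.integrable Y ν)]
    ring
  · simp only [Submodule.coe_smul, Pi.smul_apply, smul_eq_mul, hlin.map_smul, integral_const_mul]
    ring
  · have h1 := abs_apply_le hlin hpos hC
    have h2 := norm_integral_le_of_norm_le_const (μ := ν)
      (.of_forall fun ω => (Real.norm_eq_abs _).trans_le (hC ω))
    rw [Real.norm_eq_abs] at h2
    calc _ ≤ |μ X| + |∫ ω, (X : Ω → ℝ) ω ∂ν| := abs_sub _ _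
      _ ≤ _ := by linarith
  · change μ (indBM A hA) - ∫ ω, A.indicator 1 ω ∂ν = 0
    rw [integral_indicator_one hA, measureReal_def, hνA A hA,
      ENNReal.toReal_ofReal (hpos _ (indBM_nonneg _ _)), sub_self]

end PositiveFunctional

section Regime

variable {𝒜 : Set (BM Ω)} {S : Submodule ℝ (BM Ω)} {p : S →ₗ[ℝ] ℝ} {ρ : BM Ω → ℝ}

lemma monotone_of_isGLB (h𝒜mono : ∀ x ∈ 𝒜, ∀ y : BM Ω, y ≤ x → y ∈ 𝒜)
    (hρ : ∀ X : BM Ω, IsGLB {r : ℝ | ∃ Z : S, p Z = r ∧ X - (Z : BM Ω) ∈ 𝒜} (ρ X)) :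
    Monotone ρ := fun X Y hXY =>
  (hρ Y).mono (hρ X) fun _ ⟨Z, hZ, hYZ⟩ =>
    ⟨Z, hZ, h𝒜mono _ hYZ _ fun ω => sub_le_sub_right (hXY ω) _⟩

lemma convexOn_of_isGLB (h𝒜conv : Convex ℝ 𝒜)
    (hρ : ∀ X : BM Ω, IsGLB {r : ℝ | ∃ Z : S, p Z = r ∧ X - (Z : BM Ω) ∈ 𝒜} (ρ X)) :
    ConvexOn ℝ univ ρ := by
  refine ⟨convex_univ, fun X _ Y _ a b ha hb hab => le_of_forall_pos_le_add fun ε hε => ?_⟩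
  obtain ⟨_, ⟨Z, rfl, hZ⟩, -, hρZ⟩ := (hρ X).exists_between (lt_add_of_pos_right _ hε)
  obtain ⟨_, ⟨W, rfl, hW⟩, -, hρW⟩ := (hρ Y).exists_between (lt_add_of_pos_right _ hε)
  have hmem : a • X + b • Y - ((a • Z + b • W : S) : BM Ω) ∈ 𝒜 := by
    convert h𝒜conv hZ hW ha hb hab using 1
    push_cast
    module
  calc ρ (a • X + b • Y) ≤ p (a • Z + b • W) := (hρ _).1 ⟨_, rfl, hmem⟩
    _ = a * p Z + b * p W := by simp
    _ ≤ a * (ρ X + ε) + b * (ρ Y + ε) := by gcongr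
    _ = a • ρ X + b • ρ Y + ε := by linear_combination ε * hab

lemma le_add_of_isGLB
    (hρ : ∀ X : BM Ω, IsGLB {r : ℝ | ∃ Z : S, p Z = r ∧ X - (Z : BM Ω) ∈ 𝒜} (ρ X))
    (X : BM Ω) (Z : S) : ρ (X + Z) ≤ ρ X + p Z := by
  rw [← sub_le_iff_le_add]
  refine (hρ X).2 fun _ ⟨W, hW, hXW⟩ => ?_
  rw [← hW, sub_le_iff_le_add, ← map_add]
  exact (hρ _).1 ⟨W + Z, rfl, by convert hXW using 1; push_cast; abel⟩

end Regime

def IsContinuousFromAbove (ρ : BM Ω → ℝ) : Prop :=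
  ∀ (X : ℕ → BM Ω) (Y : BM Ω), (∀ n m : ℕ, n ≤ m → X m ≤ X n) →
    (∀ ω, Tendsto (fun n => (X n : Ω → ℝ) ω) atTop (𝓝 ((Y : Ω → ℝ) ω))) →
    Tendsto (fun n => ρ (X n)) atTop (𝓝 (ρ Y))

section Dominated

variable {ρ μ : BM Ω → ℝ} {K : ℝ}

lemma add_nonneg_of_le_add (hlin : IsLinearMap ℝ μ) (hK : ∀ X, μ X ≤ ρ X + K) :
    0 ≤ ρ 0 + K := by
  simpa [hlin.map_zero] using hK 0

lemma nonneg_of_le_add (hmono : Monotone ρ) (hlin : IsLinearMap ℝ μ) (hK : ∀ X, μ X ≤ ρ X + K)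
    {X : BM Ω} (hX : 0 ≤ X) : 0 ≤ μ X := by
  refine neg_nonpos.1 (nonpos_of_forall_pos_mul_le (c := ρ 0 + K) fun t ht => ?_)
  calc t * -μ X = μ (-(t • X)) := by rw [hlin.map_neg, hlin.map_smul, smul_eq_mul, mul_neg]
    _ ≤ ρ (-(t • X)) + K := hK _
    _ ≤ ρ 0 + K := by
      gcongr
      exact hmono fun ω => neg_nonpos.2 (mul_nonneg ht.le (hX ω))

lemma apply_eq_of_le_add {S : Submodule ℝ (BM Ω)} {p : S →ₗ[ℝ] ℝ}
    (hcash : ∀ X (Z : S), ρ (X + Z) ≤ ρ X + p Z) (hlin : IsLinearMap ℝ μ)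
    (hK : ∀ X, μ X ≤ ρ X + K) (Z : S) : μ Z = p Z := by
  have key : ∀ t : ℝ, t * (μ Z - p Z) ≤ ρ 0 + K := fun t => by
    have h1 := hcash 0 (t • Z)
    have h2 := hK ((t • Z : S) : BM Ω)
    simp only [zero_add, Submodule.coe_smul, hlin.map_smul, map_smul, smul_eq_mul] at h1 h2
    linarith
  refine le_antisymm (sub_nonpos.1 (nonpos_of_forall_pos_mul_le fun t _ => key t))
    (sub_nonpos.1 (nonpos_of_forall_pos_mul_le (c := ρ 0 + K) fun t _ => ?_))
  linarith [key (-t)]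

lemma eventually_apply_indBM_le (hca : IsContinuousFromAbove ρ) {B : ℕ → Set Ω}
    (hB : ∀ n, MeasurableSet (B n)) (hanti : Antitone B) (hempty : ⋂ n, B n = ∅)
    {ε : ℝ} (hε : 0 < ε) :
    ∀ᶠ n in atTop, ∀ (μ : BM Ω → ℝ) (K : ℝ), IsLinearMap ℝ μ → (∀ X, μ X ≤ ρ X + K) →
      μ (indBM (B n) (hB n)) ≤ ε * (1 + ρ 0 + K) := by
  have hlim : Tendsto (fun n => ρ (ε⁻¹ • indBM (B n) (hB n))) atTop (𝓝 (ρ 0)) := by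
    refine hca _ 0 (fun n m hnm ω => ?_) fun ω => ?_
    · exact mul_le_mul_of_nonneg_left (indBM_mono _ _ (hanti hnm) ω) (inv_nonneg.2 hε.le)
    · have h := (hanti.tendsto_indicator B (fun _ => (1 : ℝ)) ω).mono_right (pure_le_nhds _)
      simpa [indBM, hempty] using h.const_mul ε⁻¹
  filter_upwards [hlim.eventually (eventually_le_nhds (lt_add_one (ρ 0)))] with n hn μ K hlin hK
  have h := hK (ε⁻¹ • indBM (B n) (hB n))
  rw [hlin.map_smul, smul_eq_mul] at h
  calc μ (indBM (B n) (hB n)) = ε * (ε⁻¹ * μ (indBM (B n) (hB n))) := by field_simp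
    _ ≤ ε * (1 + ρ 0 + K) := by gcongr; linarith

lemma tendsto_apply_indBM_of_le_add (hmono : Monotone ρ) (hca : IsContinuousFromAbove ρ)
    (hlin : IsLinearMap ℝ μ) (hK : ∀ X, μ X ≤ ρ X + K) {B : ℕ → Set Ω}
    (hB : ∀ n, MeasurableSet (B n)) (hanti : Antitone B) (hempty : ⋂ n, B n = ∅) :
    Tendsto (fun n => μ (indBM (B n) (hB n))) atTop (𝓝 0) := by
  have hL : 0 < 1 + ρ 0 + K := by linarith [add_nonneg_of_le_add hlin hK]
  refine tendsto_order.2 ⟨fun a ha => .of_forall fun n =>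
    ha.trans_le (nonneg_of_le_add hmono hlin hK (indBM_nonneg _ _)), fun a ha => ?_⟩
  filter_upwards [eventually_apply_indBM_le hca hB hanti hempty (div_pos ha (mul_pos two_pos hL))]
    with n hn
  refine (hn μ K hlin hK).trans_lt ?_
  rw [div_mul_eq_mul_div, mul_div_mul_right _ _ hL.ne']
  exact half_lt_self ha

lemma exists_measure_eq_integral_of_le_add (hmono : Monotone ρ) (hca : IsContinuousFromAbove ρ)
    (hlin : IsLinearMap ℝ μ) (hK : ∀ X, μ X ≤ ρ X + K) :
    ∃ ν : Measure Ω, IsFiniteMeasure ν ∧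
      (∀ A (hA : MeasurableSet A), ν A = ENNReal.ofReal (μ (indBM A hA))) ∧
      ∀ X : BM Ω, μ X = ∫ ω, (X : Ω → ℝ) ω ∂ν :=
  exists_measure_eq_integral hlin (fun _ => nonneg_of_le_add hmono hlin hK)
    fun _ hB hanti hempty => tendsto_apply_indBM_of_le_add hmono hca hlin hK hB hanti hempty

lemma exists_isProbabilityMeasure_of_le_add (hmono : Monotone ρ) (hca : IsContinuousFromAbove ρ)
    (hlin : IsLinearMap ℝ μ) (hK : ∀ X, μ X ≤ ρ X + K) (hμ : 0 < μ (indBM univ .univ)) :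
    ∃ P : Measure Ω, IsProbabilityMeasure P ∧
      (∀ X : BM Ω, μ (indBM univ .univ) * ∫ ω, (X : Ω → ℝ) ω ∂P = μ X) ∧
      ∀ A (hA : MeasurableSet A), P A = 0 ↔ μ (indBM A hA) = 0 := by
  obtain ⟨ν, hν, hνA, hνint⟩ := exists_measure_eq_integral_of_le_add hmono hca hlin hK
  have : NeZero ν := ⟨Measure.measure_univ_ne_zero.1 <| by
    rw [hνA _ .univ]; exact (ENNReal.ofReal_pos.2 hμ).ne'⟩
  refine ⟨(ν univ)⁻¹ • ν, inferInstance, fun X => ?_, fun A hA => ?_⟩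
  · rw [integral_smul_measure, hνA _ .univ, ENNReal.toReal_inv, ENNReal.toReal_ofReal hμ.le,
      smul_eq_mul, ← mul_assoc, mul_inv_cancel₀ hμ.ne', one_mul, hνint]
  · rw [Measure.smul_apply, smul_eq_mul, mul_eq_zero, ENNReal.inv_eq_zero, hνA A hA,
      ENNReal.ofReal_eq_zero, or_iff_right (measure_ne_top ν univ)]
    exact ⟨fun h => le_antisymm h (nonneg_of_le_add hmono hlin hK (indBM_nonneg A hA)),
      le_of_eq⟩

lemma le_add_toReal_rstar (hμ : μ ∈ domStar ρ) (X : BM Ω) :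
    μ X ≤ ρ X + (rstar ρ μ).toReal := by
  have hle : ((μ X - ρ X : ℝ) : EReal) ≤ rstar ρ μ :=
    le_iSup (fun Y => ((μ Y - ρ Y : ℝ) : EReal)) X
  rw [← EReal.coe_toReal hμ.2 (ne_bot_of_le_ne_bot (EReal.coe_ne_bot _) hle),
    EReal.coe_le_coe_iff] at hle
  linarith

lemma mem_domStar_of_le_add (hmono : Monotone ρ) (hlin : IsLinearMap ℝ μ)
    (hK : ∀ X, μ X ≤ ρ X + K) : μ ∈ domStar ρ :=
  ⟨memBa_of_nonneg hlin fun _ => nonneg_of_le_add hmono hlin hK,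
    ne_top_of_le_ne_top (EReal.coe_ne_top K)
      (iSup_le fun X => EReal.coe_le_coe_iff.2 (by linarith [hK X]))⟩

end Dominated

lemma exists_pos_hasSum_one_summable_mul (K : ℕ → ℝ) :
    ∃ b : ℕ → ℝ, (∀ n, 0 < b n) ∧ HasSum b 1 ∧ Summable fun n => b n * K n := by
  set a : ℕ → ℝ := fun n => (1 / 2) ^ n / (1 + |K n|)
  have ha : ∀ n, 0 < a n := fun n => by positivity
  have haK : ∀ n, ‖a n * K n‖ ≤ (1 / 2) ^ n := fun n =>
    calc ‖a n * K n‖ = (1 / 2) ^ n * (|K n| / (1 + |K n|)) := by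
          rw [Real.norm_eq_abs, abs_mul, abs_of_pos (ha n)]; ring
      _ ≤ (1 / 2) ^ n * 1 := by gcongr; exact (div_le_one (by positivity)).2 (by linarith)
      _ = (1 / 2) ^ n := mul_one _
  have hsum : Summable a := summable_geometric_two.of_nonneg_of_le (fun n => (ha n).le)
    fun n => div_le_self (by positivity) (by linarith [abs_nonneg (K n)])
  have hpos : 0 < ∑' n, a n := hsum.tsum_pos (fun n => (ha n).le) 0 (ha 0)
  refine ⟨fun n => a n / ∑' n, a n, fun n => div_pos (ha n) hpos, ?_, ?_⟩
  · simpa [div_self hpos.ne'] using hsum.hasSum.div_const (∑' n, a n)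
  · simpa [div_mul_eq_mul_div] using
      (summable_geometric_two.of_norm_bounded haK).div_const (∑' n, a n)

section Mixture

variable {ρ : BM Ω → ℝ} {μ : ℕ → BM Ω → ℝ} {K b : ℕ → ℝ}

lemma summable_mul_apply_of_le_add (hlin : ∀ n, IsLinearMap ℝ (μ n))
    (hK : ∀ n X, μ n X ≤ ρ X + K n) (hb : ∀ n, 0 ≤ b n) (hbs : Summable b)
    (hbK : Summable fun n => b n * K n) (X : BM Ω) : Summable fun n => b n * μ n X := by
  refine ((hbs.mul_right (|ρ X| + |ρ (-X)|)).add hbK).of_norm_bounded fun n => ?_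
  have h1 := hK n X
  have h2 := hK n (-X)
  rw [(hlin n).map_neg] at h2
  rw [Real.norm_eq_abs, abs_mul, abs_of_nonneg (hb n), ← mul_add]
  refine mul_le_mul_of_nonneg_left (abs_le.2 ⟨?_, ?_⟩) (hb n)
  · linarith [le_abs_self (ρ (-X)), abs_nonneg (ρ X)]
  · linarith [le_abs_self (ρ X), abs_nonneg (ρ (-X))]

lemma isLinearMap_tsum_mul (hlin : ∀ n, IsLinearMap ℝ (μ n))
    (hsum : ∀ X, Summable fun n => b n * μ n X) : IsLinearMap ℝ fun X => ∑' n, b n * μ n X :=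
  ⟨fun X Y => by simpa only [(hlin _).map_add, mul_add] using (hsum X).tsum_add (hsum Y),
    fun c X => by simpa only [(hlin _).map_smul, smul_eq_mul, mul_left_comm (b _) c] using
      tsum_mul_left⟩

lemma tsum_mul_le_add (hK : ∀ n X, μ n X ≤ ρ X + K n) (hb : ∀ n, 0 ≤ b n) (hb1 : HasSum b 1)
    (hbK : Summable fun n => b n * K n) {X : BM Ω} (hsum : Summable fun n => b n * μ n X) :
    ∑' n, b n * μ n X ≤ ρ X + ∑' n, b n * K n :=
  calc ∑' n, b n * μ n X ≤ ∑' n, (b n * ρ X + b n * K n) :=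
        hsum.tsum_le_tsum
          (fun n => by rw [← mul_add]; exact mul_le_mul_of_nonneg_left (hK n X) (hb n))
          ((hb1.summable.mul_right _).add hbK)
    _ = ρ X + ∑' n, b n * K n := by
      rw [(hb1.summable.mul_right _).tsum_add hbK, tsum_mul_right, hb1.tsum_eq, one_mul]

end Mixture

section Domain

variable {ρ : BM Ω → ℝ}

theorem exists_mem_domStar_null_iff (hmono : Monotone ρ) {f : ℕ → BM Ω → ℝ}
    (hf : ∀ n, f n ∈ domStar ρ) :
    ∃ μ₀ ∈ domStar ρ, ∀ A (hA : MeasurableSet A),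
      μ₀ (indBM A hA) = 0 ↔ ∀ n, f n (indBM A hA) = 0 := by
  have hlin := fun n => (hf n).1.1
  have hK := fun n => le_add_toReal_rstar (hf n)
  obtain ⟨b, hb, hb1, hbK⟩ := exists_pos_hasSum_one_summable_mul fun n => (rstar ρ (f n)).toReal
  have hsum := summable_mul_apply_of_le_add hlin hK (fun n => (hb n).le) hb1.summable hbK
  refine ⟨_, mem_domStar_of_le_add hmono (isLinearMap_tsum_mul hlin hsum)
    fun X => tsum_mul_le_add hK (fun n => (hb n).le) hb1 hbK (hsum X), fun A hA => ?_⟩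
  have hnonneg : ∀ n, 0 ≤ b n * f n (indBM A hA) := fun n =>
    mul_nonneg (hb n).le (nonneg_of_le_add hmono (hlin n) (hK n) (indBM_nonneg A hA))
  rw [← (hsum _).hasSum_iff, hasSum_zero_iff_of_nonneg hnonneg, funext_iff]
  simp [(hb _).ne']

theorem exists_seq_mem_domStar_forall_null (hmono : Monotone ρ) (hconv : ConvexOn ℝ univ ρ)
    (hca : IsContinuousFromAbove ρ) :
    ∃ f : ℕ → BM Ω → ℝ, (∀ n, f n ∈ domStar ρ) ∧ ∀ A (hA : MeasurableSet A),
      (∀ n, f n (indBM A hA) = 0) → ∀ μ ∈ domStar ρ, μ (indBM A hA) = 0 := by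
  obtain ⟨ℓ, hℓ⟩ := hconv.exists_linearMap_le_sub
  have : Nonempty (domStar ρ) :=
    ⟨⟨ℓ, mem_domStar_of_le_add hmono ℓ.isLinear (K := -ρ 0) fun X => by linarith [hℓ X]⟩⟩
  choose ν _ hνA _ using fun μ : domStar ρ =>
    exists_measure_eq_integral_of_le_add hmono hca μ.2.1.1 (le_add_toReal_rstar μ.2)
  -- normalizing by `L μ` makes the family uniformly continuous at `∅`
  set L : domStar ρ → ℝ := fun μ => 1 + ρ 0 + (rstar ρ μ).toReal
  have hL : ∀ μ, 0 < L μ := fun μ => by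
    linarith [add_nonneg_of_le_add μ.2.1.1 (le_add_toReal_rstar μ.2)]
  have hν' : ∀ μ A (hA : MeasurableSet A),
      (ENNReal.ofReal (L μ)⁻¹ • ν μ) A = ENNReal.ofReal ((L μ)⁻¹ * μ.1 (indBM A hA)) :=
    fun μ A hA => by
      rw [Measure.smul_apply, hνA, smul_eq_mul, ← ENNReal.ofReal_mul (inv_nonneg.2 (hL μ).le)]
  obtain ⟨f, hf⟩ :=
    exists_seq_forall_null_of_tendsto_iSup (fun μ => ENNReal.ofReal (L μ)⁻¹ • ν μ)
    fun B hB hanti hempty => by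
      refine ENNReal.tendsto_atTop_zero.2 fun ε hε => ?_
      obtain ⟨δ, -, hδ, hδε⟩ := ENNReal.lt_iff_exists_real_btwn.1 hε
      obtain ⟨N, hN⟩ := eventually_atTop.1
        (eventually_apply_indBM_le hca hB hanti hempty (ENNReal.ofReal_pos.1 hδ))
      refine ⟨N, fun n hn => iSup_le fun μ => ?_⟩
      rw [hν' μ _ (hB n)]
      refine (ENNReal.ofReal_le_ofReal ?_).trans hδε.le
      rw [inv_mul_le_iff₀ (hL μ), mul_comm]
      exact hN n hn μ _ μ.2.1.1 (le_add_toReal_rstar μ.2)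
  refine ⟨fun n => f n, fun n => (f n).2, fun A hA h0 μ hμ => ?_⟩
  beta_reduce at h0
  have h := hf A hA (fun n => by rw [hν' _ _ hA, h0 n, mul_zero, ENNReal.ofReal_zero]) ⟨μ, hμ⟩
  rw [hν' _ _ hA, ENNReal.ofReal_eq_zero, inv_mul_le_iff₀ (hL _), mul_zero] at h
  exact le_antisymm h
    (nonneg_of_le_add hmono hμ.1.1 (le_add_toReal_rstar hμ) (indBM_nonneg A hA))

end Domain

theorem stmt6_general (𝒜 : Set (BM Ω)) (S : Submodule ℝ (BM Ω))
    (p : S →ₗ[ℝ] ℝ)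
    (h𝒜conv : Convex ℝ 𝒜)
    (h𝒜mono : ∀ x ∈ 𝒜, ∀ y : BM Ω, y ≤ x → y ∈ 𝒜)
    (hU : ∃ U : S, 0 < (U : BM Ω))
    (hpstrict : ∀ Z : S, 0 < (Z : BM Ω) → 0 < p Z)
    -- ρ is the associated (finite) risk measure
    (ρ : BM Ω → ℝ)
    (hρ : ∀ X : BM Ω, IsGLB {r : ℝ | ∃ Z : S, p Z = r ∧ X - (Z : BM Ω) ∈ 𝒜} (ρ X))
    -- ρ is continuous from above
    (hca : ∀ (X : ℕ → BM Ω) (Y : BM Ω),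
      (∀ n m : ℕ, n ≤ m → X m ≤ X n) →
      (∀ ω, Filter.Tendsto (fun n => (X n : Ω → ℝ) ω) Filter.atTop (nhds ((Y : Ω → ℝ) ω))) →
      Filter.Tendsto (fun n => ρ (X n)) Filter.atTop (nhds (ρ Y))) :
    ∃ P : Measure Ω, IsProbabilityMeasure P ∧
      -- ρ*(c ⬝ P) < ∞ for a suitable c > 0
      (∃ c : ℝ, 0 < c ∧
        rstar ρ (fun X => c * ∫ ω, (X : Ω → ℝ) ω ∂P) ≠ ⊤) ∧
      -- P ≈ dom(ρ*)
      (∀ (A : Set Ω) (hA : MeasurableSet A),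
        P A = 0 ↔ ∀ μ ∈ domStar ρ, μ (indBM A hA) = 0) ∧
      -- dom(ρ*) ⊆ (ca_P)₊ : every element of the domain is positive and is
      -- represented by a finite measure absolutely continuous w.r.t. P
      (∀ μ ∈ domStar ρ,
        (∀ X : BM Ω, 0 ≤ X → 0 ≤ μ X) ∧
        ∃ ν : Measure Ω, IsFiniteMeasure ν ∧ ν ≪ P ∧
          ∀ X : BM Ω, μ X = ∫ ω, (X : Ω → ℝ) ω ∂ν) := by
  have hmono := monotone_of_isGLB h𝒜mono hρ
  obtain ⟨f, hf, hnull⟩ :=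
    exists_seq_mem_domStar_forall_null hmono (convexOn_of_isGLB h𝒜conv hρ) hca
  obtain ⟨μ₀, hμ₀, hμ₀null⟩ := exists_mem_domStar_null_iff hmono hf
  have hK₀ := le_add_toReal_rstar hμ₀
  obtain ⟨U, hU⟩ := hU
  have hc : 0 < μ₀ (indBM univ .univ) := by
    refine pos_apply_indBM_univ hμ₀.1.1 (fun _ => nonneg_of_le_add hmono hμ₀.1.1 hK₀)
      (X := U) ?_
    rw [apply_eq_of_le_add (le_add_of_isGLB hρ) hμ₀.1.1 hK₀]
    exact hpstrict U hU
  obtain ⟨P, hP, hPint, hPnull⟩ :=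
    exists_isProbabilityMeasure_of_le_add hmono hca hμ₀.1.1 hK₀ hc
  have hPnull' : ∀ A (hA : MeasurableSet A),
      P A = 0 ↔ ∀ μ ∈ domStar ρ, μ (indBM A hA) = 0 := fun A hA =>
    (hPnull A hA).trans ⟨fun h => hnull A hA ((hμ₀null A hA).1 h), fun h => h μ₀ hμ₀⟩
  refine ⟨P, hP, ⟨_, hc, by simpa only [hPint] using hμ₀.2⟩, hPnull', fun μ hμ => ?_⟩
  have hK := le_add_toReal_rstar hμ
  obtain ⟨ν, hν, hνA, hνint⟩ := exists_measure_eq_integral_of_le_add hmono hca hμ.1.1 hK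
  refine ⟨fun _ => nonneg_of_le_add hmono hμ.1.1 hK, ν, hν, .mk fun A hA hPA => ?_, hνint⟩
  rw [hνA A hA, (hPnull' A hA).1 hPA μ hμ, ENNReal.ofReal_zero]

theorem stmt6 (𝒜 : Set (BM Ω)) (S : Submodule ℝ (BM Ω)) [FiniteDimensional ℝ S]
    (p : S →ₗ[ℝ] ℝ)
    (h𝒜ne : 𝒜.Nonempty) (h𝒜proper : 𝒜 ≠ Set.univ) (h𝒜conv : Convex ℝ 𝒜)
    (h𝒜mono : ∀ x ∈ 𝒜, ∀ y : BM Ω, y ≤ x → y ∈ 𝒜)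
    (hSproper : S ≠ ⊤) (hU : ∃ U : S, 0 < (U : BM Ω))
    (hppos : ∀ Z : S, 0 ≤ (Z : BM Ω) → 0 ≤ p Z)
    (hpstrict : ∀ Z : S, 0 < (Z : BM Ω) → 0 < p Z)
    (hregime : ∀ X : BM Ω, BddAbove {r : ℝ | ∃ Z : S, p Z = r ∧ X + (Z : BM Ω) ∈ 𝒜})
    -- ρ is the associated (finite) risk measure
    (ρ : BM Ω → ℝ)
    (hρ : ∀ X : BM Ω, IsGLB {r : ℝ | ∃ Z : S, p Z = r ∧ X - (Z : BM Ω) ∈ 𝒜} (ρ X))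
    -- ρ is continuous from above
    (hca : ∀ (X : ℕ → BM Ω) (Y : BM Ω),
      (∀ n m : ℕ, n ≤ m → X m ≤ X n) →
      (∀ ω, Filter.Tendsto (fun n => (X n : Ω → ℝ) ω) Filter.atTop (nhds ((Y : Ω → ℝ) ω))) →
      Filter.Tendsto (fun n => ρ (X n)) Filter.atTop (nhds (ρ Y))) :
    ∃ P : Measure Ω, IsProbabilityMeasure P ∧
      -- ρ*(c ⬝ P) < ∞ for a suitable c > 0
      (∃ c : ℝ, 0 < c ∧
        rstar ρ (fun X => c * ∫ ω, (X : Ω → ℝ) ω ∂P) ≠ ⊤) ∧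
      -- P ≈ dom(ρ*)
      (∀ (A : Set Ω) (hA : MeasurableSet A),
        P A = 0 ↔ ∀ μ ∈ domStar ρ, μ (indBM A hA) = 0) ∧
      -- dom(ρ*) ⊆ (ca_P)₊ : every element of the domain is positive and is
      -- represented by a finite measure absolutely continuous w.r.t. P
      (∀ μ ∈ domStar ρ,
        (∀ X : BM Ω, 0 ≤ X → 0 ≤ μ X) ∧
        ∃ ν : Measure Ω, IsFiniteMeasure ν ∧ ν ≪ P ∧
          ∀ X : BM Ω, μ X = ∫ ω, (X : Ω → ℝ) ω ∂ν) :=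
  stmt6_general 𝒜 S p h𝒜conv h𝒜mono hU hpstrict ρ hρ hca
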